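/- arXiv:1201.4724 — 3 statements merged into one kernel-verified Lean document; each statement's English description precedes it below -/
import Mathlib

section
/- In a Bayesian network with junction tree, for any tree edge i–j, the set fa(U_{i→j}) \ U_{i→j} of parents of upstream variables that are not themselves upstream is contained in the separator S_{ij} = C_i ∩ C_j. -/
open Finset
open scoped Classical

/-- A junction tree for a Bayesian network with variable index set `U`:
a tree of clusters `C i ⊆ U` (indexed by `I`) satisfying the covering property
(via a cluster assignment `cl` with `fa(u) = {u} ∪ pa(u) ⊆ C (cl u)`) and the
running-intersection property. -/
structure JT (U : Type) [Fintype U] [DecidableEq U] (I : Type) [Fintype I] where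
  /-- the tree on clusters -/
  G : SimpleGraph I
  tree : G.IsTree
  /-- the clusters -/
  C : I → Finset U
  /-- the parent sets of the DAG of the Bayesian network -/
  pa : U → Finset U
  /-- the cluster assignment -/
  cl : U → I
  /-- covering: the family fa(u) of each variable is contained in its assigned cluster -/
  cover : ∀ u : U, insert u (pa u) ⊆ C (cl u)
  /-- running intersection -/
  runInter : ∀ i j : I, ∀ pth : G.Path i j, ∀ k ∈ pth.1.support, C i ∩ C j ⊆ C k

/-- The upstream set U_{i→j} : variables whose assigned cluster lies on the `i` side
of the edge i–j, i.e. `i` is on the path from `cl u` to `j`. -/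
noncomputable def upSet {U I : Type} [Fintype U] [DecidableEq U] [Fintype I]
    (J : JT U I) (i j : I) : Finset U :=
  Finset.univ.filter fun u => ∃ pth : J.G.Path (J.cl u) j, i ∈ pth.1.support

/-- The separator S_{ij} = C i ∩ C j of an edge. -/
def sep {U I : Type} [Fintype U] [DecidableEq U] [Fintype I]
    (J : JT U I) (i j : I) : Finset U := J.C i ∩ J.C j

/-- Marginal of a nonnegative function `f` on assignments: sum of `f` over all
assignments agreeing with `x` on the coordinates in `A`. -/
noncomputable def margOn {U : Type} [Fintype U] [DecidableEq U] {D : U → Type}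
    [∀ u, Fintype (D u)] [∀ u, DecidableEq (D u)]
    (f : (∀ u, D u) → ℝ) (A : Finset U) (x : ∀ u, D u) : ℝ :=
  ∑ z : ∀ u, D u, if ∀ v ∈ A, z v = x v then f z else 0

/-- The message M_{i→j}(X_{S_ij}) = ∑_{X_{V_{i→j}}} ∏_{u ∈ U_{i→j}} K_u, realized as a sum
over full assignments agreeing with `x` outside V_{i→j} = U_{i→j} \ S_{ij}. -/
noncomputable def msg {U I : Type} [Fintype U] [DecidableEq U] [Fintype I]
    (J : JT U I) {D : U → Type} [∀ u, Fintype (D u)] [∀ u, DecidableEq (D u)]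
    (K : (u : U) → (∀ v, D v) → ℝ) (i j : I) (x : ∀ u, D u) : ℝ :=
  ∑ z : ∀ u, D u,
    if ∀ v, v ∉ upSet J i j \ sep J i j → z v = x v
    then ∏ u ∈ upSet J i j, K u z else 0

/-- The neighbor set n(j) of a cluster in the junction tree. -/
noncomputable def nbr {U I : Type} [Fintype U] [DecidableEq U] [Fintype I]
    (J : JT U I) (j : I) : Finset I :=
  Finset.univ.filter fun i => J.G.Adj i j

/-- The cluster potential Φ_j = ∏_{u : cl u = j} K_u. -/
noncomputable def pot {U I : Type} [Fintype U] [DecidableEq U] [Fintype I]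
    (J : JT U I) {D : U → Type} [∀ u, Fintype (D u)] [∀ u, DecidableEq (D u)]
    (K : (u : U) → (∀ v, D v) → ℝ) (j : I) (x : ∀ u, D u) : ℝ :=
  ∏ u ∈ Finset.univ.filter (fun u => J.cl u = j), K u x

/-!
Removing the tree edge `i – j` leaves `i` and `j` in different components. The path from
`cl w` to `j` through `i` shows that `cl w` lies on the `i` side, and the path from `cl u` to `j`
avoiding `i` shows that `cl u` lies on the `j` side; so the path from `cl w` to `cl u` crosses the
edge `i – j`. Since `u ∈ fa(w)`, the covering property puts `u` in both end clusters of that path,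
and running intersection puts it in `C i` and `C j`.
-/

namespace SimpleGraph

variable {V : Type*} {G : SimpleGraph V} {a b i j : V}

lemma Walk.IsPath.reachable_deleteEdges_of_mem_support {p : G.Walk a j} (hp : p.IsPath)
    (hi : i ∈ p.support) (hij : i ≠ j) : (G.deleteEdges {s(i, j)}).Reachable a i := by
  refine reachable_deleteEdges_iff_exists_walk.2 ⟨p.takeUntil i hi, fun he => ?_⟩
  exact Walk.endpoint_notMem_support_takeUntil hp hi hij.symm
    ((p.takeUntil i hi).snd_mem_support_of_mem_edges he)

lemma Walk.reachable_deleteEdges_of_notMem_support (p : G.Walk b j) (hi : i ∉ p.support) :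
    (G.deleteEdges {s(i, j)}).Reachable b j :=
  reachable_deleteEdges_iff_exists_walk.2 ⟨p, fun he => hi (p.fst_mem_support_of_mem_edges he)⟩

lemma IsBridge.mem_edges_of_reachable_deleteEdges (hbr : G.IsBridge s(i, j))
    (ha : (G.deleteEdges {s(i, j)}).Reachable a i) (hb : (G.deleteEdges {s(i, j)}).Reachable b j)
    (p : G.Walk a b) : s(i, j) ∈ p.edges := by
  by_contra hp
  have hab := reachable_deleteEdges_iff_exists_walk.2 ⟨p, hp⟩
  exact isBridge_iff.1 hbr (ha.symm.trans (hab.trans hb))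

end SimpleGraph

open SimpleGraph

lemma mem_upSet {U I : Type} [Fintype U] [DecidableEq U] [Fintype I] {J : JT U I} {i j : I}
    {u : U} : u ∈ upSet J i j ↔ ∃ pth : J.G.Path (J.cl u) j, i ∈ pth.1.support := by
  simp [upSet]

/-- Parents of upstream variables that are not themselves upstream lie in the separator:
fa(U_{i→j}) \ U_{i→j} ⊆ S_{ij} = C_i ∩ C_j. -/
theorem jt_external_parents_in_separator {U I : Type} [Fintype U] [DecidableEq U] [Fintype I]
    (J : JT U I) (i j : I) (hij : J.G.Adj i j) (u : U)
    (hu : u ∈ (upSet J i j).biUnion (fun w => insert w (J.pa w)))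
    (hnotup : u ∉ upSet J i j) :
    u ∈ J.C i ∩ J.C j := by
  obtain ⟨w, hw, hfam⟩ := mem_biUnion.1 hu
  obtain ⟨Q, hiQ⟩ := mem_upSet.1 hw
  obtain ⟨R, hR⟩ := (J.tree.existsUnique_path (J.cl u) j).exists
  have hiR : i ∉ R.support := fun hi => hnotup (mem_upSet.2 ⟨⟨R, hR⟩, hi⟩)
  obtain ⟨P, hP⟩ := (J.tree.existsUnique_path (J.cl w) (J.cl u)).exists
  have hcross : s(i, j) ∈ P.edges :=
    (isAcyclic_iff_forall_adj_isBridge.1 J.tree.isAcyclic hij).mem_edges_of_reachable_deleteEdges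
      (Q.2.reachable_deleteEdges_of_mem_support hiQ hij.ne)
      (R.reachable_deleteEdges_of_notMem_support hiR) P
  have hends : u ∈ J.C (J.cl w) ∩ J.C (J.cl u) :=
    mem_inter.2 ⟨J.cover w hfam, J.cover u (mem_insert_self u _)⟩
  exact mem_inter.2 ⟨J.runInter _ _ ⟨P, hP⟩ i (P.fst_mem_support_of_mem_edges hcross) hends,
    J.runInter _ _ ⟨P, hP⟩ j (P.snd_mem_support_of_mem_edges hcross) hends⟩
end

section
/- Define for each junction-tree edge i–j the message M_{i→j}(X_{S_{ij}}) = ∑_{X_{V_{i→j}}} ∏_{u ∈ U_{i→j}} K_u(X_{fa(u)}), where V_{i→j} = U_{i→j} \ S_{ij}. Then for any edge i–j of the junction tree and any assignment of X_{S_{ij}}, P(X_{S_{ij}}, E) = M_{i→j}(X_{S_{ij}}) · M_{j→i}(X_{S_{ij}}), where E is the evidence event. -/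
open Finset
open scoped Classical

/-!
Removing the edge `i–j` splits the tree into two sides, and `U_{i→j}`, `U_{j→i}` are the variables
assigned to clusters on either side. By running intersection, the family of a variable on the
`i`-side meets `V_{j→i}` nowhere, so `∏_{u ∈ U_{i→j}} K_u` does not depend on `X_{V_{j→i}}`, and
symmetrically. As `V_{i→j}` and `V_{j→i}` partition `U \ S_{ij}`, summing out `U \ S_{ij}` from
`∏_u K_u` factorizes into the two messages.
-/

namespace SimpleGraph

variable {V : Type*} {G : SimpleGraph V}

def edgeSide (G : SimpleGraph V) (i j : V) : Set V :=
  {v | ∃ p : G.Path v j, i ∈ p.1.support}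

lemma IsAcyclic.support_subset_support_walk (hG : G.IsAcyclic) {a b : V} (p : G.Path a b)
    (w : G.Walk a b) : p.1.support ⊆ w.support := by
  classical
  rw [(hG.subsingleton_path a b).elim p w.toPath]
  exact w.support_toPath_subset_support

lemma mem_edgeSide_or (hG : G.Connected) {i j : V} (hij : G.Adj i j) (v : V) :
    v ∈ G.edgeSide i j ∨ v ∈ G.edgeSide j i := by
  classical
  obtain ⟨w⟩ := hG.preconnected v j
  by_cases hi : i ∈ w.toPath.1.support
  · exact Or.inl ⟨w.toPath, hi⟩
  · exact Or.inr ⟨⟨_, w.toPath.2.concat hi hij.symm⟩, by simp⟩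

lemma disjoint_edgeSide (hG : G.IsAcyclic) {i j : V} (hij : G.Adj i j) :
    Disjoint (G.edgeSide i j) (G.edgeSide j i) := by
  classical
  refine Set.disjoint_left.2 fun v ⟨p, hip⟩ ⟨q, hjq⟩ => ?_
  exact Walk.endpoint_notMem_support_takeUntil q.2 hjq hij.ne
    (hG.support_subset_support_walk p _ hip)

lemma isCompl_edgeSide (hG : G.IsTree) {i j : V} (hij : G.Adj i j) :
    IsCompl (G.edgeSide i j) (G.edgeSide j i) :=
  ⟨disjoint_edgeSide hG.isAcyclic hij,
    codisjoint_iff.2 <| Set.eq_univ_of_forall (mem_edgeSide_or hG.connected hij)⟩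

lemma mem_support_of_mem_edgeSide (hG : G.IsTree) {i j a b : V} (hij : G.Adj i j)
    (ha : a ∈ G.edgeSide i j) (hb : b ∈ G.edgeSide j i) (w : G.Walk a b) : i ∈ w.support := by
  classical
  by_contra hiw
  obtain ⟨r⟩ := hG.connected.preconnected b j
  have hir : i ∉ r.toPath.1.support := fun hir =>
    Set.disjoint_left.1 (disjoint_edgeSide hG.isAcyclic hij) ⟨r.toPath, hir⟩ hb
  obtain ⟨p, hip⟩ := ha
  have := hG.isAcyclic.support_subset_support_walk p (w.append r.toPath.1) hip
  rw [Walk.mem_support_append_iff] at this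
  exact this.elim hiw hir

end SimpleGraph

section Factorization

variable {ι R : Type*} [Fintype ι] [DecidableEq ι] [CommSemiring R] {D : ι → Type*}
  [∀ i, Fintype (D i)] [∀ i, DecidableEq (D i)]

theorem sum_ite_union_mul_eq_mul_sum {A B : Finset ι} (hAB : Disjoint A B)
    {f g : (∀ i, D i) → R}
    (hf : ∀ z z', (∀ v ∉ B, z v = z' v) → f z = f z')
    (hg : ∀ z z', (∀ v ∉ A, z v = z' v) → g z = g z') (x : ∀ i, D i) :
    (∑ z, if ∀ v, v ∉ A ∪ B → z v = x v then f z * g z else 0) =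
      (∑ z, if ∀ v, v ∉ A → z v = x v then f z else 0) *
        ∑ z, if ∀ v, v ∉ B → z v = x v then g z else 0 := by
  rw [← sum_filter, ← sum_filter, ← sum_filter, sum_mul_sum, ← sum_product']
  refine sum_nbij' (fun z => (A.piecewise z x, B.piecewise z x)) (fun p => A.piecewise p.1 p.2)
    ?_ ?_ ?_ ?_ ?_
  all_goals simp only [mem_filter, mem_product, mem_univ, true_and, mem_union, not_or, and_imp]
  · intro z _
    exact ⟨fun v hv => piecewise_eq_of_notMem _ _ _ hv,
      fun v hv => piecewise_eq_of_notMem _ _ _ hv⟩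
  · intro p _ hp₂ v hvA hvB
    rw [piecewise_eq_of_notMem _ _ _ hvA]
    exact hp₂ v hvB
  · intro z hz
    ext v
    by_cases hA : v ∈ A
    · simp [hA]
    · by_cases hB : v ∈ B <;> simp [hA, hB, hz]
  · intro p hp₁ hp₂
    refine Prod.ext (funext fun v => ?_) (funext fun v => ?_)
    · by_cases hA : v ∈ A <;> simp [hA, hp₁]
    · by_cases hB : v ∈ B
      · simp [hB, disjoint_right.1 hAB hB]
      · simp [hB, hp₂]
  · intro z hz
    congr 1
    · refine hf _ _ fun v hvB => ?_
      by_cases hA : v ∈ A <;> simp [hA, hz, hvB]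
    · refine hg _ _ fun v hvA => ?_
      by_cases hB : v ∈ B <;> simp [hvA, hB, hz]

end Factorization

namespace JT

variable {U I : Type} [Fintype U] [DecidableEq U] [Fintype I] (J : JT U I)

lemma mem_upSet {i j : I} {u : U} : u ∈ upSet J i j ↔ J.cl u ∈ J.G.edgeSide i j := by
  simp [upSet, SimpleGraph.edgeSide]

lemma compl_upSet {i j : I} (hij : J.G.Adj i j) : (upSet J i j)ᶜ = upSet J j i := by
  ext u
  rw [mem_compl, mem_upSet, mem_upSet, ← Set.mem_compl_iff,
    (SimpleGraph.isCompl_edgeSide J.tree hij).compl_eq]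

lemma sep_comm (i j : I) : sep J i j = sep J j i :=
  inter_comm _ _

/-- The path between the two clusters crosses the edge `i–j`, so running intersection applies. -/
lemma mem_sep_of_mem_C_cl {i j : I} (hij : J.G.Adj i j) {u v : U} (hu : u ∈ upSet J i j)
    (hv : v ∈ upSet J j i) (hvu : v ∈ J.C (J.cl u)) : v ∈ sep J i j := by
  classical
  rw [mem_upSet] at hu hv
  obtain ⟨w⟩ := J.tree.connected.preconnected (J.cl u) (J.cl v)
  have hvv : v ∈ J.C (J.cl u) ∩ J.C (J.cl v) :=
    mem_inter.2 ⟨hvu, J.cover v (mem_insert_self _ _)⟩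
  have hi := SimpleGraph.mem_support_of_mem_edgeSide J.tree hij hu hv w.toPath.1
  have hj : j ∈ w.toPath.1.support := by
    simpa using SimpleGraph.mem_support_of_mem_edgeSide J.tree hij.symm hv hu w.toPath.1.reverse
  exact mem_inter.2 ⟨J.runInter _ _ _ i hi hvv, J.runInter _ _ _ j hj hvv⟩

lemma prod_upSet_congr {D : U → Type} {R : Type*} [CommMonoid R]
    {K : (u : U) → (∀ v, D v) → R}
    (hK : ∀ u z z', (∀ v ∈ insert u (J.pa u), z v = z' v) → K u z = K u z')
    {i j : I} (hij : J.G.Adj i j) (z z' : ∀ u, D u)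
    (h : ∀ v ∉ upSet J j i \ sep J j i, z v = z' v) :
    ∏ u ∈ upSet J i j, K u z = ∏ u ∈ upSet J i j, K u z' := by
  refine prod_congr rfl fun u hu => hK u z z' fun v hv => h v fun hv' => ?_
  rw [mem_sdiff, ← sep_comm] at hv'
  exact hv'.2 (J.mem_sep_of_mem_C_cl hij hu hv'.1 (J.cover u hv))

end JT

/-- Separator marginal with evidence: P(X_{S_ij}, E) = M_{i→j}(X_{S_ij}) · M_{j→i}(X_{S_ij}). -/
theorem jt_separator_marginal {U I : Type} [Fintype U] [DecidableEq U] [Fintype I]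
    (J : JT U I) {D : U → Type} [∀ u, Fintype (D u)] [∀ u, DecidableEq (D u)]
    (cpd : (u : U) → (∀ v, D v) → ℝ) (ev : (u : U) → Finset (D u))
    (K : (u : U) → (∀ v, D v) → ℝ)
    (hK : ∀ u x, K u x = (if x u ∈ ev u then (1 : ℝ) else 0) * cpd u x)
    (hloc : ∀ u x x', (∀ v ∈ insert u (J.pa u), x v = x' v) → cpd u x = cpd u x')
    (i j : I) (hij : J.G.Adj i j) (x : ∀ u, D u) :
    margOn (fun z => ∏ u : U, K u z) (sep J i j) x = msg J K i j x * msg J K j i x := by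
  have hKloc : ∀ u z z', (∀ v ∈ insert u (J.pa u), z v = z' v) → K u z = K u z' :=
    fun u z z' h => by rw [hK, hK, h u (mem_insert_self u _), hloc u z z' h]
  have hcompl := J.compl_upSet hij
  have hdisj : Disjoint (upSet J i j \ sep J i j) (upSet J j i \ sep J j i) := by
    rw [← hcompl]
    exact disjoint_compl_right.mono sdiff_le sdiff_le
  have hsep :
      ∀ v, v ∈ sep J i j ↔ v ∉ upSet J i j \ sep J i j ∪ upSet J j i \ sep J j i := by
    intro v
    rw [← J.sep_comm, ← union_sdiff_distrib, ← hcompl, union_compl, mem_sdiff]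
    simp
  rw [margOn, msg, msg, ← sum_ite_union_mul_eq_mul_sum hdisj (J.prod_upSet_congr hKloc hij)
    (J.prod_upSet_congr hKloc hij.symm)]
  simp_rw [hsep, ← prod_mul_prod_compl (upSet J i j), hcompl]
end

section
/- The junction-tree messages satisfy the belief-propagation recursion: for every tree edge j–k, M_{j→k}(X_{S_{jk}}) = ∑_{X_{C_j \ S_{jk}}} Φ_j(X_{C_j}) ∏_{i ∈ n(j), i ≠ k} M_{i→j}(X_{S_{ij}}). -/
/-!
Write `sumOut A f` for `f` with the variables in `A` summed out, so that `M_{i→j}` is the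
product of the kernels upstream of `i–j` with `U_{i→j} \ S_{ij}` summed out. Removing `j`
splits the kernels upstream of `j–k` into those assigned to `j`, whose product is `Φ_j`, and
those behind the other neighbours `i` of `j`. By running intersection, the eliminated
variables split accordingly into `C_j \ S_{jk}` and the sets `U_{i→j} \ S_{ij}`, which avoid
`C_j`, while the kernels behind `i` only involve `U_{i→j} ∪ S_{ij}`, where `S_{ij} ⊆ C_j`.
Summing out the branch variables first therefore factorises into `Φ_j` times one sum per
branch, and these are the messages `M_{i→j}`.
-/

open Finset
open scoped Classical

theorem dependsOn_prod {U ι M : Type*} {D : U → Type*} [CommMonoid M] {s : Finset ι}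
    {f : ι → (∀ u, D u) → M} {S : Set U} (hf : ∀ i ∈ s, DependsOn (f i) S) :
    DependsOn (fun x => ∏ i ∈ s, f i x) S :=
  fun _ _ hxy => Finset.prod_congr rfl fun i hi => hf i hi hxy

section SumOut

variable {U : Type*} [DecidableEq U] {D : U → Type*} [∀ u, Fintype (D u)]

/-- The discrete analogue of `MeasureTheory.lmarginal`. -/
def sumOut {M : Type*} [AddCommMonoid M] (A : Finset U) (f : (∀ u, D u) → M)
    (x : ∀ u, D u) : M :=
  ∑ y : ∀ u : A, D u, f (Function.updateFinset x A y)

theorem sum_ite_eq_sumOut [Fintype U] [∀ u, DecidableEq (D u)] {M : Type*} [AddCommMonoid M]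
    (A : Finset U) (f : (∀ u, D u) → M) (x : ∀ u, D u) :
    (∑ z : ∀ u, D u, if ∀ v, v ∉ A → z v = x v then f z else 0) = sumOut A f x := by
  rw [← Finset.sum_filter]
  refine Finset.sum_bij' (fun z _ v => z v) (fun y _ => Function.updateFinset x A y)
    (fun _ _ => Finset.mem_univ _) (fun y _ => ?_) (fun z hz => ?_) (fun y _ => ?_)
    (fun z hz => ?_)
  · simp only [Finset.mem_filter, Finset.mem_univ, true_and]
    intro v hv
    simp [Function.updateFinset, hv]
  · simp only [Finset.mem_filter, Finset.mem_univ, true_and] at hz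
    funext v
    by_cases hv : v ∈ A <;> simp [Function.updateFinset, hv, hz v]
  · exact Function.restrict_updateFinset x y
  · simp only [Finset.mem_filter, Finset.mem_univ, true_and] at hz
    congr 1
    funext v
    by_cases hv : v ∈ A <;> simp [Function.updateFinset, hv, hz v]

theorem DependsOn.sumOut {M : Type*} [AddCommMonoid M] {f : (∀ u, D u) → M} {S : Set U}
    (hf : DependsOn f S) (A : Finset U) : DependsOn (sumOut A f) (S \ A) :=
  fun _ _ h => Finset.sum_congr rfl fun y _ => hf.updateFinset y h

theorem sumOut_empty {M : Type*} [AddCommMonoid M] (f : (∀ u, D u) → M) (x : ∀ u, D u) :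
    sumOut ∅ f x = f x := by
  simp [sumOut]

theorem sumOut_union {M : Type*} [AddCommMonoid M] {A B : Finset U} (hAB : Disjoint A B)
    (f : (∀ u, D u) → M) : sumOut (A ∪ B) f = sumOut A (sumOut B f) := by
  funext x
  simp_rw [sumOut, Function.updateFinset_updateFinset hAB, ← Fintype.sum_prod_type']
  exact ((Equiv.piFinsetUnion D hAB).sum_comp fun y => f (Function.updateFinset x (A ∪ B) y)).symm

theorem sumOut_mul_left {R : Type*} [CommSemiring R] {A : Finset U} {g : (∀ u, D u) → R}
    (hg : DependsOn g (↑A)ᶜ) (f : (∀ u, D u) → R) (x : ∀ u, D u) :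
    sumOut A (fun z => g z * f z) x = g x * sumOut A f x := by
  rw [sumOut, sumOut, Finset.mul_sum]
  refine Finset.sum_congr rfl fun y _ => ?_
  have hv : ∀ v ∈ (↑A : Set U)ᶜ, Function.updateFinset x A y v = x v := fun v hv => by
    simp [Function.updateFinset, Finset.mem_coe.not.mp hv]
  rw [hg hv]

theorem sumOut_union_mul {R : Type*} [CommSemiring R] {A B : Finset U} (hAB : Disjoint A B)
    {f g : (∀ u, D u) → R} (hf : DependsOn f (↑B)ᶜ) (hg : DependsOn g (↑A)ᶜ)
    (x : ∀ u, D u) :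
    sumOut (A ∪ B) (fun z => f z * g z) x = sumOut A f x * sumOut B g x := by
  have hgB : DependsOn (sumOut B g) (↑A)ᶜ := (hg.sumOut B).mono Set.sdiff_subset
  calc sumOut (A ∪ B) (fun z => f z * g z) x
      = sumOut A (fun z => sumOut B g z * f z) x := by
        rw [sumOut_union hAB]
        congr 1
        funext z
        rw [sumOut_mul_left hf, mul_comm]
    _ = sumOut A f x * sumOut B g x := by rw [sumOut_mul_left hgB, mul_comm]

theorem sumOut_biUnion_prod {R ι : Type*} [CommSemiring R] [DecidableEq ι] {s : Finset ι}
    {V : ι → Finset U} {W : ι → Set U} {h : ι → (∀ u, D u) → R}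
    (hVW : ∀ i ∈ s, ↑(V i) ⊆ W i) (hWV : ∀ i ∈ s, ∀ i' ∈ s, i ≠ i' → Disjoint (W i) ↑(V i'))
    (hh : ∀ i ∈ s, DependsOn (h i) (W i)) (x : ∀ u, D u) :
    sumOut (s.biUnion V) (fun z => ∏ i ∈ s, h i z) x = ∏ i ∈ s, sumOut (V i) (h i) x := by
  induction s using Finset.induction_on with
  | empty => simp [sumOut_empty]
  | insert a s ha ih =>
    have has : a ∈ insert a s := Finset.mem_insert_self a s
    have hsub : ∀ i ∈ s, i ∈ insert a s := fun _ => Finset.mem_insert_of_mem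
    have hne : ∀ i ∈ s, a ≠ i := fun i hi hai => ha (hai ▸ hi)
    have hWa : Disjoint (W a) ↑(s.biUnion V) := by
      rw [Finset.coe_biUnion]
      exact Set.disjoint_iUnion₂_right.mpr fun i hi => hWV a has i (hsub i hi) (hne i hi)
    have hrest : DependsOn (fun z => ∏ i ∈ s, h i z) (↑(V a))ᶜ :=
      dependsOn_prod fun i hi => (hh i (hsub i hi)).mono <|
        Set.subset_compl_iff_disjoint_right.mpr <| hWV i (hsub i hi) a has (hne i hi).symm
    simp_rw [Finset.biUnion_insert, Finset.prod_insert ha]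
    rw [sumOut_union_mul (Finset.disjoint_coe.mp (hWa.mono_left (hVW a has)))
      ((hh a has).mono (Set.subset_compl_iff_disjoint_right.mpr hWa)) hrest,
      ih (fun i hi => hVW i (hsub i hi)) (fun i hi i' hi' => hWV i (hsub i hi) i' (hsub i' hi'))
        (fun i hi => hh i (hsub i hi))]

end SumOut

theorem SimpleGraph.IsAcyclic.support_subset_support_append {V : Type*} {G : SimpleGraph V}
    (hG : G.IsAcyclic) {a b c : V} {p : G.Walk a c} (hp : p.IsPath) (q : G.Walk a b)
    (r : G.Walk b c) : p.support ⊆ (q.append r).support := by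
  classical
  have hpq : p = (q.append r).bypass :=
    congrArg Subtype.val ((hG.subsingleton_path a c).elim ⟨p, hp⟩ ⟨_, (q.append r).bypass_isPath⟩)
  exact hpq ▸ (q.append r).support_bypass_subset_support

section JunctionTree

variable {U I : Type} [Fintype U] [DecidableEq U] [Fintype I] (J : JT U I)

theorem JT.exists_isPath (a b : I) : ∃ p : J.G.Walk a b, p.IsPath :=
  (J.tree.connected.preconnected a b).exists_isPath

theorem JT.mem_C_cl (u : U) : u ∈ J.C (J.cl u) :=
  J.cover u (Finset.mem_insert_self u (J.pa u))

variable {J} {u : U} {i i' j k : I}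

theorem mem_upSet_iff {p : J.G.Walk (J.cl u) j} (hp : p.IsPath) :
    u ∈ upSet J i j ↔ i ∈ p.support := by
  simp only [upSet, Finset.mem_filter, Finset.mem_univ, true_and]
  constructor
  · rintro ⟨q, hq⟩
    rwa [(J.tree.isAcyclic.subsingleton_path _ _).elim q ⟨p, hp⟩] at hq
  · exact fun hi => ⟨⟨p, hp⟩, hi⟩

variable (J) in
theorem mem_upSet_cl (u : U) (k : I) : u ∈ upSet J (J.cl u) k := by
  obtain ⟨p, hp⟩ := J.exists_isPath (J.cl u) k
  exact (mem_upSet_iff hp).mpr p.start_mem_support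

theorem notMem_upSet_of_ne (h : i ≠ J.cl u) : u ∉ upSet J i (J.cl u) := by
  rw [mem_upSet_iff SimpleGraph.Walk.IsPath.nil]
  simpa using h

theorem mem_upSet_iff_notMem (hij : J.G.Adj i j) : u ∈ upSet J i j ↔ u ∉ upSet J j i := by
  obtain ⟨p, hp⟩ := J.exists_isPath (J.cl u) j
  obtain ⟨q, hq⟩ := J.exists_isPath (J.cl u) i
  rw [mem_upSet_iff hp, mem_upSet_iff hq]
  exact ⟨J.tree.isAcyclic.ne_mem_support_of_support_of_adj_of_isPath hp hq hij.symm,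
    J.tree.isAcyclic.mem_support_of_ne_mem_support_of_adj_of_isPath hp hq hij.symm⟩

theorem disjoint_upSet (hij : J.G.Adj i j) (hi'j : J.G.Adj i' j) (hne : i ≠ i') :
    Disjoint (upSet J i j) (upSet J i' j) := by
  refine Finset.disjoint_left.mpr fun u hu hu' => hne ?_
  obtain ⟨p, hp⟩ := J.exists_isPath (J.cl u) j
  rw [J.tree.isAcyclic.eq_penultimate_of_adj_end hp hij.symm ((mem_upSet_iff hp).mp hu),
    J.tree.isAcyclic.eq_penultimate_of_adj_end hp hi'j.symm ((mem_upSet_iff hp).mp hu')]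

theorem upSet_subset_upSet (hjk : J.G.Adj j k) (hij : J.G.Adj i j) (hik : i ≠ k) :
    upSet J i j ⊆ upSet J j k := fun _ hu =>
  (mem_upSet_iff_notMem hjk).mpr fun hu' =>
    Finset.disjoint_left.mp (disjoint_upSet hij hjk.symm hik) hu hu'

theorem exists_adj_mem_upSet (hu : u ∈ upSet J j k) (hne : J.cl u ≠ j) :
    ∃ i, J.G.Adj i j ∧ i ≠ k ∧ u ∈ upSet J i j := by
  obtain ⟨p, hp⟩ := J.exists_isPath (J.cl u) j
  have hnil : ¬p.Nil := SimpleGraph.Walk.not_nil_of_ne hne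
  have hpen : u ∈ upSet J p.penultimate j := (mem_upSet_iff hp).mpr (p.getVert_mem_support _)
  refine ⟨p.penultimate, p.adj_penultimate hnil, fun hk => ?_, hpen⟩
  exact (mem_upSet_iff_notMem (hk ▸ p.adj_penultimate hnil)).mp (hk ▸ hpen) hu

theorem mem_C_of_mem_upSet (hu : u ∈ upSet J i j) (hj : u ∈ J.C j) : u ∈ J.C i := by
  obtain ⟨p, hp⟩ := J.exists_isPath (J.cl u) j
  exact J.runInter _ _ ⟨p, hp⟩ i ((mem_upSet_iff hp).mp hu)
    (Finset.mem_inter.mpr ⟨J.mem_C_cl u, hj⟩)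

theorem C_sdiff_subset_upSet (hjk : J.G.Adj j k) : J.C j \ J.C k ⊆ upSet J j k := by
  intro u hu
  rw [Finset.mem_sdiff] at hu
  exact (mem_upSet_iff_notMem hjk).mpr fun hu' => hu.2 (mem_C_of_mem_upSet hu' hu.1)

theorem insert_pa_subset (hij : J.G.Adj i j) (hu : u ∈ upSet J i j) :
    insert u (J.pa u) ⊆ upSet J i j ∪ sep J i j := by
  intro v hv
  rw [Finset.mem_union]
  by_cases hvi : v ∈ upSet J i j
  · exact Or.inl hvi
  right
  obtain ⟨p, hp⟩ := J.exists_isPath (J.cl u) j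
  obtain ⟨q, hq⟩ := J.exists_isPath (J.cl u) (J.cl v)
  obtain ⟨r, hr⟩ := J.exists_isPath (J.cl v) j
  -- `i` separates `cl u` from `j` but not `cl v` from `j`, so it lies between `cl u` and `cl v`.
  have hiq : i ∈ q.support := by
    have hi := J.tree.isAcyclic.support_subset_support_append hp q r ((mem_upSet_iff hp).mp hu)
    rw [SimpleGraph.Walk.mem_support_append_iff] at hi
    exact hi.resolve_right fun h => hvi ((mem_upSet_iff hr).mpr h)
  have hvCi : v ∈ J.C i :=
    J.runInter _ _ ⟨q, hq⟩ i hiq (Finset.mem_inter.mpr ⟨J.cover u hv, J.mem_C_cl v⟩)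
  exact Finset.mem_inter.mpr
    ⟨hvCi, mem_C_of_mem_upSet ((mem_upSet_iff_notMem hij.symm).mpr hvi) hvCi⟩

theorem notMem_C_of_mem_upSet_sdiff_sep (hu : u ∈ upSet J i j \ sep J i j) : u ∉ J.C j :=
  fun hj => (Finset.mem_sdiff.mp hu).2
    (Finset.mem_inter.mpr ⟨mem_C_of_mem_upSet (Finset.mem_sdiff.mp hu).1 hj, hj⟩)

theorem mem_nbr_erase_iff : i ∈ (nbr J j).erase k ↔ J.G.Adj i j ∧ i ≠ k := by
  simp [nbr, and_comm]

theorem upSet_eq_union (hjk : J.G.Adj j k) :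
    upSet J j k = Finset.univ.filter (fun u => J.cl u = j) ∪
      ((nbr J j).erase k).biUnion fun i => upSet J i j := by
  ext u
  simp only [Finset.mem_union, Finset.mem_filter, Finset.mem_univ, true_and,
    Finset.mem_biUnion, mem_nbr_erase_iff]
  constructor
  · intro hu
    by_cases hcl : J.cl u = j
    · exact Or.inl hcl
    · obtain ⟨i, hij, hik, hui⟩ := exists_adj_mem_upSet hu hcl
      exact Or.inr ⟨i, ⟨hij, hik⟩, hui⟩
  · rintro (hcl | ⟨i, ⟨hij, hik⟩, hui⟩)
    · exact hcl ▸ mem_upSet_cl J u k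
    · exact upSet_subset_upSet hjk hij hik hui

theorem upSet_sdiff_sep_eq (hjk : J.G.Adj j k) :
    upSet J j k \ sep J j k = (J.C j \ sep J j k) ∪
      ((nbr J j).erase k).biUnion fun i => upSet J i j \ sep J i j := by
  ext u
  simp only [Finset.mem_union, Finset.mem_sdiff, Finset.mem_biUnion, mem_nbr_erase_iff]
  constructor
  · rintro ⟨hu, hS⟩
    by_cases hj : u ∈ J.C j
    · exact Or.inl ⟨hj, hS⟩
    · have hcl : J.cl u ≠ j := fun h => hj (h ▸ J.mem_C_cl u)
      obtain ⟨i, hij, hik, hui⟩ := exists_adj_mem_upSet hu hcl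
      exact Or.inr ⟨i, ⟨hij, hik⟩, hui, fun h => hj (Finset.mem_inter.mp h).2⟩
  · rintro (⟨hj, hS⟩ | ⟨i, ⟨hij, hik⟩, hui⟩)
    · have hk : u ∉ J.C k := fun h => hS (Finset.mem_inter.mpr ⟨hj, h⟩)
      exact ⟨C_sdiff_subset_upSet hjk (Finset.mem_sdiff.mpr ⟨hj, hk⟩), hS⟩
    · have hj := notMem_C_of_mem_upSet_sdiff_sep (Finset.mem_sdiff.mpr hui)
      exact ⟨upSet_subset_upSet hjk hij hik hui.1, fun h => hj (Finset.mem_inter.mp h).1⟩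

end JunctionTree

section Messages

variable {U I : Type} [Fintype U] [DecidableEq U] [Fintype I] {J : JT U I} {D : U → Type}
  [∀ u, Fintype (D u)] [∀ u, DecidableEq (D u)] {K : (u : U) → (∀ v, D v) → ℝ} {j k : I}

variable (J K) in
theorem msg_eq_sumOut (i j : I) :
    msg J K i j = sumOut (upSet J i j \ sep J i j) fun z => ∏ u ∈ upSet J i j, K u z :=
  funext (sum_ite_eq_sumOut _ _)

theorem dependsOn_pot (hK : ∀ u, DependsOn (K u) ↑(insert u (J.pa u))) :
    DependsOn (pot J K j) ↑(J.C j) :=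
  dependsOn_prod fun u hu => (hK u).mono <| Finset.coe_subset.mpr <|
    (Finset.mem_filter.mp hu).2 ▸ J.cover u

theorem prod_upSet_eq (hjk : J.G.Adj j k) (x : ∀ u, D u) :
    ∏ u ∈ upSet J j k, K u x =
      pot J K j x * ∏ i ∈ (nbr J j).erase k, ∏ u ∈ upSet J i j, K u x := by
  have hbranches : ((((nbr J j).erase k : Finset I) : Set I)).PairwiseDisjoint (upSet J · j) :=
    fun i hi i' hi' hne => disjoint_upSet (mem_nbr_erase_iff.mp hi).1
      (mem_nbr_erase_iff.mp hi').1 hne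
  have hcl : Disjoint (Finset.univ.filter fun u => J.cl u = j)
      (((nbr J j).erase k).biUnion fun i => upSet J i j) := by
    refine (Finset.disjoint_biUnion_right _ _ _).mpr fun i hi =>
      Finset.disjoint_left.mpr fun u hu => ?_
    obtain rfl := (Finset.mem_filter.mp hu).2
    exact notMem_upSet_of_ne (mem_nbr_erase_iff.mp hi).1.ne
  rw [upSet_eq_union hjk, Finset.prod_union hcl, Finset.prod_biUnion hbranches, pot]

theorem sumOut_prod_upSet_eq_prod_msg (hK : ∀ u, DependsOn (K u) ↑(insert u (J.pa u)))
    {s : Finset I} (hs : s ⊆ nbr J j) (x : ∀ u, D u) :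
    sumOut (s.biUnion fun i => upSet J i j \ sep J i j)
        (fun z => ∏ i ∈ s, ∏ u ∈ upSet J i j, K u z) x = ∏ i ∈ s, msg J K i j x := by
  have hadj : ∀ i ∈ s, J.G.Adj i j := fun i hi => (Finset.mem_filter.mp (hs hi)).2
  rw [sumOut_biUnion_prod (W := fun i => ↑(upSet J i j ∪ sep J i j))]
  · simp_rw [msg_eq_sumOut]
  · exact fun i _ => Finset.coe_subset.mpr (Finset.sdiff_subset.trans Finset.subset_union_left)
  · intro i hi i' hi' hne
    rw [Finset.coe_union, Set.disjoint_union_left, Finset.disjoint_coe, Finset.disjoint_coe]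
    refine ⟨(disjoint_upSet (hadj i hi) (hadj i' hi') hne).mono_right Finset.sdiff_subset,
      Finset.disjoint_left.mpr fun u hu hu' => notMem_C_of_mem_upSet_sdiff_sep hu' ?_⟩
    exact (Finset.mem_inter.mp hu).2
  · exact fun i hi => dependsOn_prod fun u hu => (hK u).mono <|
      Finset.coe_subset.mpr (insert_pa_subset (hadj i hi) hu)

end Messages

/-- Belief-propagation recursion for the messages:
M_{j→k}(X_{S_jk}) = ∑_{X_{C_j \ S_jk}} Φ_j(X_{C_j}) ∏_{i ∈ n(j), i ≠ k} M_{i→j}(X_{S_ij}). -/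
theorem jt_message_recursion {U I : Type} [Fintype U] [DecidableEq U] [Fintype I]
    (J : JT U I) {D : U → Type} [∀ u, Fintype (D u)] [∀ u, DecidableEq (D u)]
    (cpd : (u : U) → (∀ v, D v) → ℝ) (ev : (u : U) → Finset (D u))
    (K : (u : U) → (∀ v, D v) → ℝ)
    (hK : ∀ u x, K u x = (if x u ∈ ev u then (1 : ℝ) else 0) * cpd u x)
    (hloc : ∀ u x x', (∀ v ∈ insert u (J.pa u), x v = x' v) → cpd u x = cpd u x')
    (j k : I) (hjk : J.G.Adj j k) (x : ∀ u, D u) :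
    msg J K j k x =
      ∑ z : ∀ u, D u,
        if ∀ v, v ∉ J.C j \ sep J j k → z v = x v
        then pot J K j z * ∏ i ∈ (nbr J j).erase k, msg J K i j z else 0 := by
  have hKloc : ∀ u, DependsOn (K u) ↑(insert u (J.pa u)) := fun u x x' h => by
    rw [hK, hK, h u (Finset.mem_insert_self u _), hloc u x x' h]
  have hdisj : Disjoint (J.C j)
      (((nbr J j).erase k).biUnion fun i => upSet J i j \ sep J i j) :=
    (Finset.disjoint_biUnion_right _ _ _).mpr fun _ _ => Finset.disjoint_left.mpr
      fun _ hu hu' => notMem_C_of_mem_upSet_sdiff_sep hu' hu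
  rw [sum_ite_eq_sumOut, msg_eq_sumOut, upSet_sdiff_sep_eq hjk,
    sumOut_union (hdisj.mono_left Finset.sdiff_subset)]
  congr 1
  funext z
  simp_rw [prod_upSet_eq hjk]
  rw [sumOut_mul_left ((dependsOn_pot hKloc).mono
      (Set.subset_compl_iff_disjoint_right.mpr (Finset.disjoint_coe.mpr hdisj))),
    sumOut_prod_upSet_eq_prod_msg hKloc (Finset.erase_subset k _)]
end
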